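/- arXiv:1001.4420 — 5 statements merged into one kernel-verified Lean document; each statement's English description precedes it below -/
import Mathlib

section
/- The n×n two-colour checker board (tile (i,j) has colour (i+j) mod 2) requires exactly 2(n-1) Flood-It moves to flood: after k moves the flooded region connected to the top-left tile is exactly the set of tiles (i,j) with i+j-2 ≤ k, and hence 2(n-1) moves are necessary and sufficient. -/
/-- Tiles of an `n × n` board. -/
abbrev Tile (n : ℕ) := Fin n × Fin n

/-- Two tiles are adjacent if they differ by a unit step (horizontally or vertically). -/
def adjT {n : ℕ} (p q : Tile n) : Prop :=
  ((p.1 : ℤ) - (q.1 : ℤ)).natAbs + ((p.2 : ℤ) - (q.2 : ℤ)).natAbs = 1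

/-- A board assigns one of `c` colours to each tile. -/
abbrev Board (n c : ℕ) := Tile n → Fin c

/-- `SameColorConn B p q` : `q` is in the monochromatic connected region of `B`
containing `p`. -/
def SameColorConn {n c : ℕ} (B : Board n c) (p q : Tile n) : Prop :=
  Relation.ReflTransGen (fun a b => adjT a b ∧ B a = B b) p q

open Classical in
/-- A Flood-It move: recolour the monochromatic region containing `o` with colour `k`. -/
noncomputable def flood {n c : ℕ} (B : Board n c) (o : Tile n) (k : Fin c) : Board n c :=
  fun p => if SameColorConn B o p then k else B p

/-- Play a sequence of Flood-It moves (flooding from `o`). -/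
noncomputable def playMoves {n c : ℕ} (o : Tile n) : Board n c → List (Fin c) → Board n c
  | B, [] => B
  | B, k :: ks => playMoves o (flood B o k) ks

/-- A board is flooded when it is monochromatic. -/
def Flooded {n c : ℕ} (B : Board n c) : Prop := ∀ p q : Tile n, B p = B q

/-- `floodMoves B o` : the minimum number of moves (flooding from `o`) needed to
flood the board `B`. -/
noncomputable def floodMoves {n c : ℕ} (B : Board n c) (o : Tile n) : ℕ :=
  sInf {l : ℕ | ∃ ms : List (Fin c), ms.length = l ∧ Flooded (playMoves o B ms)}

/-- The n×n two-colour checker board: tile (i,j) has colour (i+j) mod 2. -/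
def checker (n : ℕ) : Board n 2 :=
  fun p => if ((p.1 : ℕ) + (p.2 : ℕ)) % 2 = 0 then 0 else 1

/-- The forced move sequence on the checker board: the t-th move (0-indexed)
picks the unique other colour, namely (t+1) mod 2. -/
def checkerMove (t : ℕ) : Fin 2 := if (t + 1) % 2 = 0 then 0 else 1

/-! On the checker board the flooded region after `k` forced moves is the triangle `i + j ≤ k`,
coloured with the parity of `k`, while every tile outside keeps its checker colour. A move either
repeats the region's own colour, which changes nothing, or takes the other colour, which absorbs
exactly the next anti-diagonal. So any `m` moves flood at most the triangle `i + j ≤ m`, and the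
board is monochromatic only once the far corner `(n-1, n-1)` is reached. -/

lemma SameColorConn.color_eq {n c : ℕ} {B : Board n c} {o p : Tile n}
    (h : SameColorConn B o p) : B p = B o := by
  induction h with
  | refl => rfl
  | tail _ hstep ih => rw [← hstep.2, ih]

lemma flood_self {n c : ℕ} (B : Board n c) (o : Tile n) : flood B o (B o) = B := by
  funext p
  by_cases h : SameColorConn B o p
  · simp only [flood, if_pos h, h.color_eq]
  · simp only [flood, if_neg h]

lemma playMoves_append {n c : ℕ} (o : Tile n) (B : Board n c) (ms : List (Fin c)) (m : Fin c) :
    playMoves o B (ms ++ [m]) = flood (playMoves o B ms) o m := by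
  induction ms generalizing B with
  | nil => rfl
  | cons a t ih => exact ih _

lemma adjT.sum_le {n : ℕ} {p q : Tile n} (h : adjT p q) :
    (q.1 : ℕ) + q.2 ≤ p.1 + p.2 + 1 := by
  unfold adjT at h
  omega

lemma exists_adjT_of_sum_pos {n : ℕ} (p : Tile n) (h : 0 < (p.1 : ℕ) + p.2) :
    ∃ q : Tile n, adjT q p ∧ (q.1 : ℕ) + q.2 + 1 = p.1 + p.2 := by
  by_cases h1 : (p.1 : ℕ) = 0
  · exact ⟨(p.1, ⟨p.2 - 1, by omega⟩), by simp only [adjT]; omega, by simp only; omega⟩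
  · exact ⟨(⟨p.1 - 1, by omega⟩, p.2), by simp only [adjT]; omega, by simp only; omega⟩

def parityColor (m : ℕ) : Fin 2 := if m % 2 = 0 then 0 else 1

lemma checkerMove_eq_parityColor (t : ℕ) : checkerMove t = parityColor (t + 1) := rfl

lemma parityColor_ne_succ (m : ℕ) : parityColor m ≠ parityColor (m + 1) := by
  unfold parityColor
  rcases Nat.mod_two_eq_zero_or_one m with h | h <;> simp [h, Nat.add_mod]

lemma eq_parityColor_or_succ (m : ℕ) (k : Fin 2) : k = parityColor m ∨ k = parityColor (m + 1) := by
  unfold parityColor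
  rcases Nat.mod_two_eq_zero_or_one m with h | h <;> simp [h, Nat.add_mod] <;> omega

/-- The checker board after its region has grown to the triangle `i + j ≤ k`. -/
def triangleBoard (n k : ℕ) : Board n 2 :=
  fun p => if (p.1 : ℕ) + p.2 ≤ k then parityColor k else parityColor (p.1 + p.2)

lemma triangleBoard_of_le {n k : ℕ} {p : Tile n} (h : (p.1 : ℕ) + p.2 ≤ k) :
    triangleBoard n k p = parityColor k :=
  if_pos h

lemma triangleBoard_of_lt {n k : ℕ} {p : Tile n} (h : k < (p.1 : ℕ) + p.2) :
    triangleBoard n k p = parityColor (p.1 + p.2) :=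
  if_neg (by omega)

lemma triangleBoard_zero (n : ℕ) : triangleBoard n 0 = checker n := by
  funext p
  by_cases h : (p.1 : ℕ) + p.2 = 0
  · rw [triangleBoard_of_le h.le, ← h]; rfl
  · exact triangleBoard_of_lt (by omega)

section Corner

variable {n : ℕ} (hn : 1 ≤ n)

lemma sameColorConn_triangleBoard_iff (k : ℕ) (p : Tile n) :
    SameColorConn (triangleBoard n k) (⟨0, hn⟩, ⟨0, hn⟩) p ↔ (p.1 : ℕ) + p.2 ≤ k := by
  constructor
  · intro h
    induction h with
    | refl => simp
    | @tail a b _ hstep ha =>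
      by_contra hb
      have hsum : (b.1 : ℕ) + b.2 = k + 1 := by have := hstep.1.sum_le; omega
      have hcolor := hstep.2
      rw [triangleBoard_of_le ha, triangleBoard_of_lt (by omega), hsum] at hcolor
      exact parityColor_ne_succ k hcolor
  · suffices ∀ m (p : Tile n), (p.1 : ℕ) + p.2 = m → m ≤ k →
        SameColorConn (triangleBoard n k) (⟨0, hn⟩, ⟨0, hn⟩) p from fun h => this _ p rfl h
    intro m
    induction m with
    | zero =>
      intro p hp _
      obtain rfl : p = (⟨0, hn⟩, ⟨0, hn⟩) := by ext <;> simp <;> omega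
      exact .refl
    | succ m ih =>
      intro p hp hm
      obtain ⟨q, hqp, hq⟩ := exists_adjT_of_sum_pos p (by omega)
      refine .tail (ih q (by omega) (by omega)) ⟨hqp, ?_⟩
      rw [triangleBoard_of_le (by omega), triangleBoard_of_le (by omega)]

lemma flood_triangleBoard_succ (k : ℕ) :
    flood (triangleBoard n k) (⟨0, hn⟩, ⟨0, hn⟩) (parityColor (k + 1)) = triangleBoard n (k + 1) := by
  funext p
  unfold flood
  rw [sameColorConn_triangleBoard_iff]
  split_ifs with h
  · rw [triangleBoard_of_le (by omega)]
  · by_cases h' : (p.1 : ℕ) + p.2 = k + 1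
    · rw [triangleBoard_of_lt (by omega), triangleBoard_of_le h'.le, h']
    · rw [triangleBoard_of_lt (by omega), triangleBoard_of_lt (by omega)]

lemma playMoves_checkerMove (k : ℕ) :
    playMoves (⟨0, hn⟩, ⟨0, hn⟩) (checker n) ((List.range k).map checkerMove) = triangleBoard n k := by
  induction k with
  | zero => exact (triangleBoard_zero n).symm
  | succ k ih =>
    rw [List.range_succ, List.map_append, List.map_singleton, playMoves_append, ih,
      checkerMove_eq_parityColor]
    exact flood_triangleBoard_succ hn k

lemma playMoves_triangleBoard (ms : List (Fin 2)) (i : ℕ) :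
    ∃ j ≤ ms.length, playMoves (⟨0, hn⟩, ⟨0, hn⟩) (triangleBoard n i) ms = triangleBoard n (i + j) := by
  induction ms generalizing i with
  | nil => exact ⟨0, le_rfl, rfl⟩
  | cons m ms ih =>
    rcases eq_parityColor_or_succ i m with rfl | rfl
    · have hcorner : triangleBoard n i (⟨0, hn⟩, ⟨0, hn⟩) = parityColor i :=
        triangleBoard_of_le (by simp)
      obtain ⟨j, hj, hplay⟩ := ih i
      refine ⟨j, by simp only [List.length_cons]; omega, ?_⟩
      rwa [playMoves, ← hcorner, flood_self]
    · obtain ⟨j, hj, hplay⟩ := ih (i + 1)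
      refine ⟨j + 1, by simp only [List.length_cons]; omega, ?_⟩
      rwa [playMoves, flood_triangleBoard_succ, ← add_assoc, add_right_comm]

end Corner

lemma flooded_triangleBoard_iff (n k : ℕ) : Flooded (triangleBoard n k) ↔ 2 * (n - 1) ≤ k := by
  constructor
  · intro hflood
    by_contra! hk
    -- a tile on the anti-diagonal `i + j = k + 1` still has the other colour
    let far : Tile n := (⟨min (k + 1) (n - 1), by omega⟩, ⟨k + 1 - min (k + 1) (n - 1), by omega⟩)
    have hfar := hflood far (⟨0, by omega⟩, ⟨0, by omega⟩)
    rw [triangleBoard_of_lt (by simp only [far]; omega), triangleBoard_of_le (by simp),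
      show (far.1 : ℕ) + far.2 = k + 1 by simp only [far]; omega] at hfar
    exact parityColor_ne_succ k hfar.symm
  · intro hk p q
    rw [triangleBoard_of_le (by omega), triangleBoard_of_le (by omega)]

/-- on the n×n checker board, after k moves (of the forced move
sequence) the flooded region is exactly the k-th anti-diagonal triangle
{(i,j) : i+j ≤ k} (0-indexed), and the minimum number of moves to flood it is
exactly 2(n-1). -/
theorem stmt8 (n : ℕ) (hn : 1 ≤ n) :
    (∀ k ≤ 2 * (n - 1),
      {p : Tile n |
          SameColorConn (playMoves (⟨0, hn⟩, ⟨0, hn⟩) (checker n)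
            ((List.range k).map checkerMove)) (⟨0, hn⟩, ⟨0, hn⟩) p}
        = {p : Tile n | (p.1 : ℕ) + (p.2 : ℕ) ≤ k}) ∧
    floodMoves (checker n) (⟨0, hn⟩, ⟨0, hn⟩) = 2 * (n - 1) := by
  refine ⟨fun k _ => ?_, IsLeast.csInf_eq ⟨?_, ?_⟩⟩
  · ext p
    rw [Set.mem_ofPred_eq, Set.mem_ofPred_eq, playMoves_checkerMove,
      sameColorConn_triangleBoard_iff]
  · refine ⟨(List.range (2 * (n - 1))).map checkerMove, by simp, ?_⟩
    rw [playMoves_checkerMove, flooded_triangleBoard_iff]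
  · rintro l ⟨ms, rfl, hflood⟩
    obtain ⟨j, hj, hplay⟩ := playMoves_triangleBoard hn ms 0
    rw [← triangleBoard_zero, hplay, flooded_triangleBoard_iff] at hflood
    omega
end

section
/- At least (n² − r²)/(2r²) pairwise disjoint r-diamonds (possibly cropped by at most two edges of the board, but each with its centre in the board) can be packed into an n×n board, provided 1 ≤ r < n/2. -/
/-!
Place the centres on the multiples of `r` in both coordinates, keeping only the black squares of
the resulting checkerboard. Two distinct such centres are at grid distance at least `2 r`, so their
`r`-diamonds are disjoint. There are `⌈n / r⌉` multiples of `r` in `[0, n)`, and at least half of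
the `⌈n / r⌉ ^ 2` lattice points are black, which gives at least `n ^ 2 / (2 r ^ 2)` centres.
-/

open Finset

/-- Grid (taxicab) distance between two tiles. -/
def gdist {n : ℕ} (p q : Tile n) : ℕ :=
  ((p.1 : ℤ) - (q.1 : ℤ)).natAbs + ((p.2 : ℤ) - (q.2 : ℤ)).natAbs

lemma gdist_comm {n : ℕ} (p q : Tile n) : gdist p q = gdist q p := by
  unfold gdist; omega

lemma gdist_triangle {n : ℕ} (p q s : Tile n) : gdist p s ≤ gdist p q + gdist q s := by
  unfold gdist; omega

lemma not_lt_and_lt_of_two_mul_le_gdist {n r : ℕ} {c₁ c₂ : Tile n} (h : 2 * r ≤ gdist c₁ c₂)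
    (p : Tile n) : ¬(gdist c₁ p < r ∧ gdist c₂ p < r) := by
  have := gdist_triangle c₁ p c₂
  rw [gdist_comm p c₂] at this
  omega

def checkerboard (K : ℕ) : Finset (ℕ × ℕ) :=
  (range K ×ˢ range K).filter fun p => Even (p.1 + p.2)

lemma sq_le_two_mul_card_checkerboard (K : ℕ) : K ^ 2 ≤ 2 * #(checkerboard K) := by
  set E := (range K).filter Even
  set O := (range K).filter fun a => ¬Even a
  have hEO : #E + #O = K :=
    (card_filter_add_card_filter_not (s := range K) Even).trans (card_range K)
  have hsplit : checkerboard K = E ×ˢ E ∪ O ×ˢ O := by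
    ext ⟨a, b⟩
    simp only [checkerboard, E, O, mem_filter, mem_product, mem_range, mem_union, Nat.even_add]
    tauto
  have hdisj : Disjoint (E ×ˢ E) (O ×ˢ O) :=
    disjoint_product.2 (Or.inl (disjoint_filter_filter_not _ _ _))
  rw [hsplit, card_union_of_disjoint hdisj, card_product, card_product, ← hEO, ← sq, ← sq]
  exact add_sq_le

def checkerLattice (n r : ℕ) : Finset (Tile n) :=
  univ.filter fun t => r ∣ (t.1 : ℕ) ∧ r ∣ (t.2 : ℕ) ∧ Even ((t.1 : ℕ) / r + (t.2 : ℕ) / r)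

lemma card_checkerboard_le_card_checkerLattice {n r : ℕ} (hr : 0 < r) :
    #(checkerboard (n ⌈/⌉ r)) ≤ #(checkerLattice n r) := by
  refine card_le_card_of_surjOn (fun t : Tile n => ((t.1 : ℕ) / r, (t.2 : ℕ) / r)) ?_
  rintro ⟨a, b⟩ hab
  simp only [checkerboard, coe_filter, mem_product, mem_range, Set.mem_ofPred_eq] at hab
  obtain ⟨⟨ha, hb⟩, heven⟩ := hab
  have hlt : ∀ {x}, x < n ⌈/⌉ r → r * x < n := fun hx =>
    lt_of_not_ge fun h => hx.not_ge ((ceilDiv_le_iff_le_mul hr).2 h)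
  refine ⟨(⟨r * a, hlt ha⟩, ⟨r * b, hlt hb⟩), ?_, ?_⟩
  · simp [checkerLattice, Nat.mul_div_cancel_left _ hr, heven]
  · simp [Nat.mul_div_cancel_left _ hr]

lemma sq_le_two_mul_sq_mul_card_checkerLattice {n r : ℕ} (hr : 0 < r) :
    n ^ 2 ≤ 2 * r ^ 2 * #(checkerLattice n r) :=
  calc n ^ 2 ≤ (r * (n ⌈/⌉ r)) ^ 2 := Nat.pow_le_pow_left (le_smul_ceilDiv hr) 2
    _ = r ^ 2 * (n ⌈/⌉ r) ^ 2 := mul_pow _ _ _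
    _ ≤ r ^ 2 * (2 * #(checkerboard (n ⌈/⌉ r))) :=
      Nat.mul_le_mul_left _ (sq_le_two_mul_card_checkerboard _)
    _ ≤ 2 * r ^ 2 * #(checkerLattice n r) := by
      rw [mul_left_comm, ← mul_assoc]
      exact Nat.mul_le_mul_left _ (card_checkerboard_le_card_checkerLattice hr)

lemma two_mul_le_gdist_of_mem_checkerLattice {n r : ℕ} {t₁ t₂ : Tile n}
    (h₁ : t₁ ∈ checkerLattice n r) (h₂ : t₂ ∈ checkerLattice n r) (hne : t₁ ≠ t₂) :
    2 * r ≤ gdist t₁ t₂ := by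
  simp only [checkerLattice, mem_filter, mem_univ, true_and, Nat.even_iff] at h₁ h₂
  obtain ⟨hx₁, hy₁, he₁⟩ := h₁
  obtain ⟨hx₂, hy₂, he₂⟩ := h₂
  have ex₁ := (Nat.mul_div_cancel' hx₁).symm
  have ey₁ := (Nat.mul_div_cancel' hy₁).symm
  have ex₂ := (Nat.mul_div_cancel' hx₂).symm
  have ey₂ := (Nat.mul_div_cancel' hy₂).symm
  generalize (t₁.1 : ℕ) / r = a₁ at ex₁ he₁
  generalize (t₁.2 : ℕ) / r = b₁ at ey₁ he₁
  generalize (t₂.1 : ℕ) / r = a₂ at ex₂ he₂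
  generalize (t₂.2 : ℕ) / r = b₂ at ey₂ he₂
  have hdiff : a₁ ≠ a₂ ∨ b₁ ≠ b₂ := by
    by_contra! h
    obtain ⟨rfl, rfl⟩ := h
    exact hne (Prod.ext (Fin.ext (ex₁.trans ex₂.symm)) (Fin.ext (ey₁.trans ey₂.symm)))
  have hgdist : gdist t₁ t₂ = r * (((a₁ : ℤ) - a₂).natAbs + ((b₁ : ℤ) - b₂).natAbs) := by
    unfold gdist
    rw [ex₁, ex₂, ey₁, ey₂]
    push_cast
    rw [← mul_sub, ← mul_sub, Int.natAbs_mul, Int.natAbs_mul, Int.natAbs_natCast, mul_add]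
  -- two distinct black squares differ by an even, nonzero taxicab distance
  have htwo : 2 ≤ ((a₁ : ℤ) - a₂).natAbs + ((b₁ : ℤ) - b₂).natAbs := by omega
  rw [hgdist, mul_comm 2]
  exact Nat.mul_le_mul_left r htwo

theorem stmt14_general (n r : ℕ) (hr : 1 ≤ r) :
    ∃ C : Finset (Tile n),
      ((n : ℝ) ^ 2 - (r : ℝ) ^ 2) / (2 * (r : ℝ) ^ 2) ≤ (C.card : ℝ) ∧
      ∀ c₁ ∈ C, ∀ c₂ ∈ C, c₁ ≠ c₂ →
        ∀ p : Tile n, ¬(gdist c₁ p < r ∧ gdist c₂ p < r) := by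
  refine ⟨checkerLattice n r, ?_, fun c₁ h₁ c₂ h₂ hne =>
    not_lt_and_lt_of_two_mul_le_gdist (two_mul_le_gdist_of_mem_checkerLattice h₁ h₂ hne)⟩
  have hcard : (n : ℝ) ^ 2 ≤ 2 * (r : ℝ) ^ 2 * #(checkerLattice n r) := by
    exact_mod_cast sq_le_two_mul_sq_mul_card_checkerLattice hr
  rw [div_le_iff₀ (by positivity)]
  nlinarith [sq_nonneg (r : ℝ)]

/-- if 1 ≤ r < n/2, at least (n² − r²)/(2r²) pairwise disjoint
(possibly cropped) r-diamonds, each with its centre in the board, can be packed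
into an n×n board.  The r-diamond centred at `t` is the set of tiles at grid
distance less than r from `t`. -/
theorem stmt14 (n r : ℕ) (hr : 1 ≤ r) (hrn : 2 * r < n) :
    ∃ C : Finset (Tile n),
      ((n : ℝ) ^ 2 - (r : ℝ) ^ 2) / (2 * (r : ℝ) ^ 2) ≤ (C.card : ℝ) ∧
      ∀ c₁ ∈ C, ∀ c₂ ∈ C, c₁ ≠ c₂ →
        ∀ p : Tile n, ¬(gdist c₁ p < r ∧ gdist c₂ p < r) :=
  stmt14_general n r hr
end

section
/- Reducing SCS to strings of length exactly 2: Let S = {s_1,…,s_k} be strings of length at most 2 over alphabet Σ with s_k of length 1, consisting of the single character a, and let S' = {s_1,…,s_{k-1}}. If a occurs in some string of S', then the minimum length of a common supersequence of S equals that of S'; if a occurs in no string of S', the minimum length of a common supersequence of S equals that of S' plus 1. -/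
/-! Adding `[a]` to an instance changes nothing when `a` already occurs in one of the strings,
since every supersequence then contains `a`. Otherwise appending `a` to an optimal supersequence
of `S'` costs one letter, and conversely erasing one occurrence of `a` from an optimal
supersequence of `S' ++ [[a]]` leaves a supersequence of `S'`, because no string of `S'`
contains `a`. -/

/-- The length of a shortest common supersequence of a finite family of strings. -/
noncomputable def scsLen {α : Type*} (S : List (List α)) : ℕ :=
  sInf {l : ℕ | ∃ t : List α, t.length = l ∧ ∀ s ∈ S, s.Sublist t}

namespace SCS

open List

variable {α : Type*}

theorem scsLen_le {S : List (List α)} {t : List α} (ht : ∀ s ∈ S, s <+ t) :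
    scsLen S ≤ t.length :=
  Nat.sInf_le ⟨t, rfl, ht⟩

theorem exists_supersequence_length_eq_scsLen (S : List (List α)) :
    ∃ t : List α, t.length = scsLen S ∧ ∀ s ∈ S, s <+ t :=
  Nat.sInf_mem (s := {l | ∃ t : List α, t.length = l ∧ ∀ s ∈ S, s <+ t})
    ⟨S.flatten.length, S.flatten, rfl, fun _ hs => List.sublist_flatten_of_mem hs⟩

theorem scsLen_mono {S T : List (List α)} (hST : S ⊆ T) : scsLen S ≤ scsLen T := by
  obtain ⟨t, htl, ht⟩ := exists_supersequence_length_eq_scsLen T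
  exact htl ▸ scsLen_le fun s hs => ht s (hST hs)

theorem scsLen_append_singleton_of_exists_mem {S : List (List α)} {a : α}
    (ha : ∃ s ∈ S, a ∈ s) : scsLen (S ++ [[a]]) = scsLen S := by
  refine le_antisymm ?_ (scsLen_mono (List.subset_append_left S [[a]]))
  obtain ⟨s₀, hs₀, has₀⟩ := ha
  obtain ⟨t, htl, ht⟩ := exists_supersequence_length_eq_scsLen S
  refine htl ▸ scsLen_le fun s hs => ?_
  rcases List.mem_append.1 hs with hs | hs
  · exact ht s hs
  · rw [List.mem_singleton.1 hs]
    exact (List.singleton_sublist.2 has₀).trans (ht s₀ hs₀)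

theorem scsLen_append_singleton_le (S : List (List α)) (a : α) :
    scsLen (S ++ [[a]]) ≤ scsLen S + 1 := by
  obtain ⟨t, htl, ht⟩ := exists_supersequence_length_eq_scsLen S
  calc scsLen (S ++ [[a]]) ≤ (t ++ [a]).length := scsLen_le fun s hs => by
        rcases List.mem_append.1 hs with hs | hs
        · exact (ht s hs).trans (List.sublist_append_left t [a])
        · rw [List.mem_singleton.1 hs]
          exact List.sublist_append_right t [a]
    _ = scsLen S + 1 := by rw [List.length_append, htl, List.length_singleton]

theorem scsLen_add_one_le_of_forall_not_mem [DecidableEq α] {S : List (List α)} {a : α}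
    (ha : ∀ s ∈ S, a ∉ s) : scsLen S + 1 ≤ scsLen (S ++ [[a]]) := by
  obtain ⟨t, htl, ht⟩ := exists_supersequence_length_eq_scsLen (S ++ [[a]])
  have hat : a ∈ t := List.singleton_sublist.1 (ht [a] (by simp))
  have herase : ∀ s ∈ S, s <+ t.erase a := fun s hs => by
    simpa [List.erase_of_not_mem (ha s hs)] using (ht s (by simp [hs])).erase a
  calc scsLen S + 1 ≤ (t.erase a).length + 1 := Nat.add_le_add_right (scsLen_le herase) 1
    _ = scsLen (S ++ [[a]]) := by rw [List.length_erase_add_one hat, htl]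

end SCS

open SCS in
theorem stmt15_general {α : Type*} (S' : List (List α)) (a : α) :
    ((∃ s ∈ S', a ∈ s) → scsLen (S' ++ [[a]]) = scsLen S') ∧
    ((∀ s ∈ S', a ∉ s) → scsLen (S' ++ [[a]]) = scsLen S' + 1) := by
  classical
  exact ⟨scsLen_append_singleton_of_exists_mem, fun ha =>
    le_antisymm (scsLen_append_singleton_le S' a) (scsLen_add_one_le_of_forall_not_mem ha)⟩

/-- removing a length-1 string from an SCS instance whose strings
have length at most 2: if the character occurs in another string the SCS length
is unchanged, otherwise it increases by exactly one. -/
theorem stmt15 {α : Type*} (S' : List (List α)) (a : α)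
    (hlen : ∀ s ∈ S', s.length ≤ 2) :
    ((∃ s ∈ S', a ∈ s) → scsLen (S' ++ [[a]]) = scsLen S') ∧
    ((∀ s ∈ S', a ∉ s) → scsLen (S' ++ [[a]]) = scsLen S' + 1) :=
  stmt15_general S' a
end

section
/- Let S = {s_1,…,s_k} be strings of length exactly 2 over Σ with s_k = aa for some a ∈ Σ. Let a' be a symbol not occurring in S, and let S' = {s_1,…,s_{k-1}, aa', a'a}. Then the length of a shortest common supersequence of S' equals the length of a shortest common supersequence of S plus 1. -/
/-!
Inserting `a'` between the two `a`s of a common supersequence of `S₀ ++ [aa]` gives one of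
`S₀ ++ [aa', a'a]`, one symbol longer. Conversely, a common supersequence `t` of
`S₀ ++ [aa', a'a]` contains `aa'a` or `a'aa'`. Deleting every `a'` from `t` keeps the strings of
`S₀`, since `a'` is fresh; in the first case what remains still contains `aa` and is shorter,
in the second at least two symbols were deleted, so prepending `a` gives a common
supersequence of `S₀ ++ [aa]` of length at most `|t| - 1`.
-/

namespace List

variable {α : Type*}

theorem sublist_or_sublist_of_pair_sublist {a b : α} (hab : a ≠ b) {t : List α}
    (h₁ : [a, b] <+ t) (h₂ : [b, a] <+ t) : [a, b, a] <+ t ∨ [b, a, b] <+ t := by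
  induction t with
  | nil => simp at h₁
  | cons x t ih =>
    rw [cons_sublist_cons'] at h₁ h₂
    rcases h₁ with h₁ | ⟨rfl, -⟩
    · rcases h₂ with h₂ | ⟨rfl, -⟩
      · exact (ih h₁ h₂).imp (·.cons x) (·.cons x)
      · exact .inr (h₁.cons_cons b)
    · rcases h₂ with h₂ | ⟨rfl, -⟩
      · exact .inl (h₂.cons_cons a)
      · exact absurd rfl hab

theorem length_filter_ne_add_count [DecidableEq α] (b : α) (l : List α) :
    (l.filter (· ≠ b)).length + l.count b = l.length := by
  rw [length_eq_countP_add_countP (· == b) (l := l), count_eq_countP, countP_eq_length_filter]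
  simp [add_comm, countP_eq_length_filter]

theorem Sublist.sublist_filter_ne_of_not_mem [DecidableEq α] {s t : List α} {b : α}
    (h : s <+ t) (hb : b ∉ s) : s <+ t.filter (· ≠ b) := by
  have : s.filter (· ≠ b) = s := filter_eq_self.mpr fun x hx => by
    simpa using ne_of_mem_of_not_mem hx hb
  exact this ▸ h.filter _

end List

open List

section

variable {α : Type*}

theorem scsLen_le {S : List (List α)} {t : List α} (h : ∀ s ∈ S, s <+ t) :
    scsLen S ≤ t.length :=
  Nat.sInf_le ⟨t, rfl, h⟩

theorem scsLen_append_singleton_le {S : List (List α)} {x t : List α} (hS : ∀ s ∈ S, s <+ t)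
    (hx : x <+ t) : scsLen (S ++ [x]) ≤ t.length :=
  scsLen_le (forall_mem_append.mpr ⟨hS, forall_mem_singleton.mpr hx⟩)

theorem exists_length_eq_scsLen (S : List (List α)) :
    ∃ t : List α, t.length = scsLen S ∧ ∀ s ∈ S, s <+ t :=
  Nat.sInf_mem (s := {l | ∃ t : List α, t.length = l ∧ ∀ s ∈ S, s <+ t})
    ⟨_, S.flatten, rfl, fun _ => sublist_flatten_of_mem⟩

theorem scsLen_append_pair_le (S : List (List α)) (a b : α) :
    scsLen (S ++ [[a, b], [b, a]]) ≤ scsLen (S ++ [[a, a]]) + 1 := by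
  obtain ⟨t, ht, hsub⟩ := exists_length_eq_scsLen (S ++ [[a, a]])
  simp only [forall_mem_append, forall_mem_singleton] at hsub
  obtain ⟨hS, haa⟩ := hsub
  obtain ⟨r₁, r₂, rfl, ha₁, ha₂⟩ := cons_sublist_iff.mp haa
  have hins : r₁ ++ r₂ <+ r₁ ++ b :: r₂ := (sublist_cons_self b r₂).append_left r₁
  calc scsLen (S ++ [[a, b], [b, a]]) ≤ (r₁ ++ b :: r₂).length := by
        refine scsLen_le ?_
        simp only [forall_mem_append, forall_mem_cons, not_mem_nil, IsEmpty.forall_iff,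
          implies_true, and_true]
        exact ⟨fun s hs => (hS s hs).trans hins,
          (singleton_sublist.mpr ha₁).append (singleton_sublist.mpr mem_cons_self),
          (ha₂.cons_cons b).trans (sublist_append_right r₁ _)⟩
    _ = scsLen (S ++ [[a, a]]) + 1 := by simp [← ht]; omega

theorem scsLen_append_le_of_not_mem (S : List (List α)) {a b : α} (hba : b ≠ a)
    (hfresh : ∀ s ∈ S, b ∉ s) :
    scsLen (S ++ [[a, a]]) + 1 ≤ scsLen (S ++ [[a, b], [b, a]]) := by
  classical
  obtain ⟨t, ht, hsub⟩ := exists_length_eq_scsLen (S ++ [[a, b], [b, a]])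
  simp only [forall_mem_append, forall_mem_cons, not_mem_nil, IsEmpty.forall_iff,
    implies_true, and_true] at hsub
  obtain ⟨hS, hab, hba'⟩ := hsub
  set u := t.filter (· ≠ b)
  have hlen : u.length + t.count b = t.length := length_filter_ne_add_count b t
  have hSu : ∀ s ∈ S, s <+ u := fun s hs => (hS s hs).sublist_filter_ne_of_not_mem (hfresh s hs)
  rw [← ht]
  rcases sublist_or_sublist_of_pair_sublist hba.symm hab hba' with h | h
  · have haa : [a, a] <+ u := by simpa [u, hba.symm] using h.filter (· ≠ b)
    have hb : 1 ≤ t.count b := (h.count_le b).trans' (by simp [hba.symm])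
    have := scsLen_append_singleton_le hSu haa
    omega
  · have ha : [a, a] <+ a :: u := by simpa [u, hba.symm] using h.filter (· ≠ b)
    have hb : 2 ≤ t.count b := (h.count_le b).trans' (by simp [hba.symm])
    have := scsLen_append_singleton_le (fun s hs => (hSu s hs).cons a) ha
    simp only [length_cons] at this
    omega

end

theorem stmt16_general {α : Type*} (S₀ : List (List α)) (a a' : α)
    (hne : a' ≠ a)
    (hfresh : ∀ s ∈ S₀, a' ∉ s) :
    scsLen (S₀ ++ [[a, a'], [a', a]]) = scsLen (S₀ ++ [[a, a]]) + 1 :=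
  le_antisymm (scsLen_append_pair_le S₀ a a') (scsLen_append_le_of_not_mem S₀ hne hfresh)

/-- replacing the string `aa` by the two strings `aa'`, `a'a`
(with `a'` a fresh symbol) in an SCS instance of length-2 strings increases the
shortest common supersequence length by exactly one. -/
theorem stmt16 {α : Type*} (S₀ : List (List α)) (a a' : α)
    (hlen : ∀ s ∈ S₀, s.length = 2)
    (hne : a' ≠ a)
    (hfresh : ∀ s ∈ S₀, a' ∉ s) :
    scsLen (S₀ ++ [[a, a'], [a', a]]) = scsLen (S₀ ++ [[a, a]]) + 1 :=
  stmt16_general S₀ a a' hne hfresh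
end

section
/- Greedy is bad for Flood-It: for every n ≥ 4 there exists an n×n board on 3 colours with m(B) = 3, on which the greedy strategy that always selects the colour yielding the largest immediate gain in flooded tiles makes n moves. -/
/-- The number of tiles in the monochromatic region of `B` containing `o`. -/
noncomputable def regionSize {n c : ℕ} (B : Board n c) (o : Tile n) : ℕ :=
  Set.ncard {p : Tile n | SameColorConn B o p}

/-- `IsGreedy o B ms` : the move sequence `ms` is a complete run of the greedy
strategy on `B`: it plays until the board is flooded, and each move picks a
colour maximising the size of the resulting flooded region (i.e. the immediate
gain in flooded tiles). -/
def IsGreedy {n c : ℕ} (o : Tile n) : Board n c → List (Fin c) → Prop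
  | B, [] => Flooded B
  | B, k :: ks => ¬Flooded B ∧
      (∀ k' : Fin c, regionSize (flood B o k') o ≤ regionSize (flood B o k) o) ∧
      IsGreedy o (flood B o k) ks

/-!
Take the rows of the board alternately coloured 2, 1, 2, … (row 0 first), except for the hub,
the part of column 0 strictly between the first and the last row, which has colour 0.
The moves 0, 1, 2 flood it: the hub joins every row to the corner. No two moves suffice,
since each colour occurs outside the corner's initial region, and such a tile keeps its colour
until that colour is played. Greedy instead takes one new row per move, since a row
(`n - 1` tiles off the hub) beats the hub (`n - 2` tiles), and only claims the hub with its
`n`-th move.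
-/

namespace FloodIt

open Relation

variable {n c : ℕ} {B : Board n c} {o p q : Tile n} {k : Fin c}

theorem SameColorConn.color_eq (h : SameColorConn B p q) : B p = B q := by
  induction h with
  | refl => rfl
  | tail _ hstep ih => exact ih.trans hstep.2

theorem flood_apply_of_sameColorConn (h : SameColorConn B o p) : flood B o k p = k :=
  if_pos h

theorem flood_apply_of_not_sameColorConn (h : ¬SameColorConn B o p) : flood B o k p = B p :=
  if_neg h

theorem flood_apply_self : flood B o k o = k :=
  flood_apply_of_sameColorConn ReflTransGen.refl

theorem flooded_flood_of_forall (h : ∀ p, B p ≠ k → SameColorConn B o p) :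
    Flooded (flood B o k) := by
  suffices ∀ p, flood B o k p = k from fun p q => (this p).trans (this q).symm
  intro p
  by_cases hp : SameColorConn B o p
  · exact flood_apply_of_sameColorConn hp
  · rw [flood_apply_of_not_sameColorConn hp]
    exact not_not.1 (mt (h p) hp)

theorem setOf_sameColorConn_eq {S : Set (Tile n)} (ho : o ∈ S)
    (hS : ∀ p ∈ S, SameColorConn B o p)
    (hclosed : ∀ p ∈ S, ∀ q, adjT p q → B p = B q → q ∈ S) :
    {p | SameColorConn B o p} = S := by
  refine Set.Subset.antisymm (fun p hp => ?_) hS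
  induction hp with
  | refl => exact ho
  | tail _ hstep ih => exact hclosed _ ih _ hstep.1 hstep.2

theorem sameColorConn_of_line (f : Fin n → Tile n)
    (hf : ∀ i i' : Fin n, (i : ℕ) + 1 = i' → adjT (f i) (f i')) {a b : Fin n} (hab : a ≤ b)
    (hB : ∀ i, a ≤ i → i ≤ b → B (f i) = k) : SameColorConn B (f a) (f b) := by
  refine ReflTransGen.lift f (fun _ _ h => h) _ _
    (reflTransGen_of_succ_of_le _ (fun i hi => ?_) hab)
  have hcov : (i : ℕ) ⋖ (Order.succ i : Fin n) :=
    Fin.covBy_iff.1 (Order.covBy_succ_of_not_isMax (not_isMax_of_lt hi.2))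
  have hsucc : Order.succ i ≤ b := Order.succ_le_of_lt hi.2
  exact ⟨hf _ _ (Nat.covBy_iff_add_one_eq.1 hcov),
    (hB i hi.1 hi.2.le).trans (hB _ (hi.1.trans (Order.le_succ i)) hsucc).symm⟩

theorem sameColorConn_col (j : Fin n) {a b : Fin n} (hab : a ≤ b)
    (hB : ∀ i, a ≤ i → i ≤ b → B (i, j) = k) : SameColorConn B (a, j) (b, j) :=
  sameColorConn_of_line (·, j) (fun i i' h => by simp [adjT]; omega) hab hB

theorem sameColorConn_row (i : Fin n) {a b : Fin n} (hab : a ≤ b)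
    (hB : ∀ j, a ≤ j → j ≤ b → B (i, j) = k) : SameColorConn B (i, a) (i, b) :=
  sameColorConn_of_line (i, ·) (fun j j' h => by simp [adjT]; omega) hab hB

def corner (h : 0 < n) : Tile n := (⟨0, h⟩, ⟨0, h⟩)

theorem sameColorConn_corner_of_row_col (h : 0 < n) {a b : Fin n}
    (hrow : ∀ j ≤ b, B (⟨0, h⟩, j) = k) (hcol : ∀ i ≤ a, B (i, b) = k) :
    SameColorConn B (corner h) (a, b) :=
  (sameColorConn_row _ (Nat.zero_le _) fun j _ hj => hrow j hj).trans
    (sameColorConn_col _ (Nat.zero_le _) fun i _ hi => hcol i hi)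

theorem sameColorConn_corner_of_col_row (h : 0 < n) {a b : Fin n}
    (hcol : ∀ i ≤ a, B (i, ⟨0, h⟩) = k) (hrow : ∀ j ≤ b, B (a, j) = k) :
    SameColorConn B (corner h) (a, b) :=
  (sameColorConn_col _ (Nat.zero_le _) fun i _ hi => hcol i hi).trans
    (sameColorConn_row _ (Nat.zero_le _) fun j _ hj => hrow j hj)

theorem playMoves_apply_self {ms : List (Fin c)} (hms : ms ≠ []) :
    playMoves o B ms o = ms.getLast hms := by
  induction ms generalizing B with
  | nil => exact absurd rfl hms
  | cons k ks ih =>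
    cases ks with
    | nil => exact flood_apply_self
    | cons k' ks' => exact ih (B := flood B o k) (List.cons_ne_nil _ _)

theorem playMoves_apply_of_not_sameColorConn {ms : List (Fin c)} (hp : ¬SameColorConn B o p)
    (hms : B p ∉ ms) : playMoves o B ms p = B p := by
  induction ms generalizing B with
  | nil => rfl
  | cons k ks ih =>
    have hk : B p ≠ k := fun h => hms (h ▸ List.mem_cons_self ..)
    have hfp : flood B o k p = B p := flood_apply_of_not_sameColorConn hp
    have hp' : ¬SameColorConn (flood B o k) o p := fun h => by
      have := SameColorConn.color_eq h
      rw [flood_apply_self, hfp] at this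
      exact hk this.symm
    change playMoves o (flood B o k) ks p = B p
    rw [ih hp' (by rw [hfp]; exact fun h => hms (List.mem_cons_of_mem _ h)), hfp]

/-- A tile outside the initial region keeps its colour until that colour is played, while the
region of `o` ends with the last colour played. -/
theorem mem_of_flooded_playMoves {ms : List (Fin c)} (hms : ms ≠ [])
    (hfl : Flooded (playMoves o B ms)) (hp : ¬SameColorConn B o p) : B p ∈ ms := by
  by_contra h
  have := hfl o p
  rw [playMoves_apply_self hms, playMoves_apply_of_not_sameColorConn hp h] at this
  exact h (this ▸ List.getLast_mem hms)

theorem card_le_length_of_flooded_playMoves {ms : List (Fin c)} (hB : ¬Flooded B)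
    (hcol : ∀ k, ∃ p, B p = k ∧ ¬SameColorConn B o p) (hfl : Flooded (playMoves o B ms)) :
    c ≤ ms.length := by
  have hms : ms ≠ [] := by rintro rfl; exact hB hfl
  have hmem (k : Fin c) : k ∈ ms := by
    obtain ⟨p, rfl, hp⟩ := hcol k
    exact mem_of_flooded_playMoves hms hfl hp
  calc c = (Finset.univ : Finset (Fin c)).card := (Finset.card_fin c).symm
    _ ≤ ms.toFinset.card := Finset.card_le_card fun k _ => List.mem_toFinset.2 (hmem k)
    _ ≤ ms.length := List.toFinset_card_le ms

theorem floodMoves_eq {ms₀ : List (Fin c)} (h₀ : Flooded (playMoves o B ms₀))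
    (hle : ∀ ms : List (Fin c), Flooded (playMoves o B ms) → ms₀.length ≤ ms.length) :
    floodMoves B o = ms₀.length :=
  le_antisymm (Nat.sInf_le ⟨ms₀, rfl, h₀⟩)
    (le_csInf ⟨_, ms₀, rfl, h₀⟩ fun _ ⟨ms, hlen, hms⟩ => hlen ▸ hle ms hms)

theorem IsGreedy.eq_nil_of_flooded {ms : List (Fin c)} (h : IsGreedy o B ms) (hB : Flooded B) :
    ms = [] := by
  cases ms with
  | nil => rfl
  | cons k ks => exact absurd hB h.1

theorem IsGreedy.tail_of_forall_lt {k' : Fin c} {ks : List (Fin c)} (h : IsGreedy o B (k' :: ks))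
    (hk : ∀ k'' ≠ k, regionSize (flood B o k'') o < regionSize (flood B o k) o) :
    IsGreedy o (flood B o k) ks := by
  obtain ⟨-, hmax, hks⟩ := h
  obtain rfl : k' = k := by
    by_contra hne
    exact (hk k' hne).not_ge (hmax k)
  exact hks

end FloodIt

namespace FloodIt.GreedyTrap

variable {n : ℕ} {t : ℕ} {c k : Fin 3} {p : Tile n}

def rowColor (r : ℕ) : Fin 3 := if Even r then 2 else 1

theorem rowColor_ne_zero (r : ℕ) : rowColor r ≠ 0 := by
  unfold rowColor; split <;> decide

theorem rowColor_succ_ne (r : ℕ) : rowColor (r + 1) ≠ rowColor r := by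
  rcases Nat.even_or_odd r with h | h <;> simp [rowColor, h, Nat.even_add_one]

theorem rowColor_eq_one_of_ne_two {r : ℕ} (h : rowColor r ≠ 2) : rowColor r = 1 := by
  unfold rowColor at h ⊢; split <;> simp_all

def hub (n : ℕ) : Set (Tile n) :=
  {p | 0 < (p.1 : ℕ) ∧ (p.1 : ℕ) + 1 < n ∧ (p.2 : ℕ) = 0}

instance : DecidablePred (· ∈ hub n) := fun _ => inferInstanceAs (Decidable (_ ∧ _ ∧ _))

def upper (n t : ℕ) : Set (Tile n) := {p | (p.1 : ℕ) ≤ t ∧ p ∉ hub n}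

theorem mem_hub : p ∈ hub n ↔ 0 < (p.1 : ℕ) ∧ (p.1 : ℕ) + 1 < n ∧ (p.2 : ℕ) = 0 :=
  Iff.rfl

theorem mem_upper :
    p ∈ upper n t ↔ (p.1 : ℕ) ≤ t ∧ ¬(0 < (p.1 : ℕ) ∧ (p.1 : ℕ) + 1 < n ∧ (p.2 : ℕ) = 0) :=
  Iff.rfl

/-- `paint n 0 2` is the board of the paper's Figure 3, and `paint n t (rowColor t)` is the
position after `t` greedy moves on it. -/
def paint (n t : ℕ) (c : Fin 3) : Board n 3 := fun p =>
  if p ∈ hub n then 0 else if (p.1 : ℕ) ≤ t then c else rowColor p.1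

theorem corner_mem_upper (h : 0 < n) (t : ℕ) : corner h ∈ upper n t := by
  simp [corner, upper, hub]

theorem paint_of_mem_upper (hp : p ∈ upper n t) : paint n t c p = c := by
  simp_all [paint, upper]

theorem paint_of_mem_hub (hp : p ∈ hub n) : paint n t c p = 0 := if_pos hp

theorem paint_of_not_mem (hp : p ∉ upper n t ∪ hub n) : paint n t c p = rowColor p.1 := by
  have hhub : p ∉ hub n := fun h => hp (Or.inr h)
  have hrow : ¬(p.1 : ℕ) ≤ t := fun h => hp (Or.inl ⟨h, hhub⟩)
  simp [paint, hhub, hrow]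

theorem paint_of_not_mem_upper (c' : Fin 3) (hp : p ∉ upper n t) :
    paint n t c p = paint n t c' p := by
  by_cases hhub : p ∈ hub n
  · simp [paint, hhub]
  · have hrow : ¬(p.1 : ℕ) ≤ t := fun h => hp ⟨h, hhub⟩
    simp [paint, hhub, hrow]

theorem sameColorConn_paint_of_mem_upper (hn : 2 ≤ n) (hp : p ∈ upper n t) :
    SameColorConn (paint n t c) (corner (by omega)) p := by
  have hrowcol (a b : Fin n) (hb : (b : ℕ) ≠ 0) (ha : (a : ℕ) ≤ t) :
      SameColorConn (paint n t c) (corner (by omega)) (a, b) :=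
    sameColorConn_corner_of_row_col _
      (fun j _ => paint_of_mem_upper (by simp only [mem_upper]; omega))
      fun i hi => paint_of_mem_upper (by simp only [mem_upper]; omega)
  obtain ⟨a, b⟩ := p
  simp only [mem_upper] at hp
  by_cases hb : (b : ℕ) = 0
  · by_cases ha : (a : ℕ) = 0
    · rw [show (a, b) = corner (by omega) from Prod.ext (Fin.ext ha) (Fin.ext hb)]
      exact Relation.ReflTransGen.refl
    -- `(a, 0)` off the hub is in the last row, reached from its right neighbour
    · refine (hrowcol a ⟨1, by omega⟩ one_ne_zero hp.1).tail ⟨by simp [adjT]; omega, ?_⟩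
      rw [paint_of_mem_upper (p := (a, ⟨1, _⟩)) (by simp only [mem_upper]; omega),
        paint_of_mem_upper (p := (a, b)) (by simp only [mem_upper]; omega)]
  · exact hrowcol a b hb hp.1

theorem setOf_sameColorConn_paint (hn : 2 ≤ n) (hc0 : c ≠ 0)
    (hc : t + 1 < n → c ≠ rowColor (t + 1)) :
    {p | SameColorConn (paint n t c) (corner (by omega)) p} = upper n t := by
  refine setOf_sameColorConn_eq (corner_mem_upper _ t)
    (fun p hp => sameColorConn_paint_of_mem_upper hn hp) fun p hp q hpq hcol => ?_
  by_contra hq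
  rw [paint_of_mem_upper hp] at hcol
  by_cases hhub : q ∈ hub n
  · exact hc0 (hcol.trans (paint_of_mem_hub hhub))
  · have hrow : (q.1 : ℕ) = t + 1 := by
      simp only [mem_upper] at hp hq
      simp only [mem_hub] at hhub
      unfold adjT at hpq
      omega
    rw [paint_of_not_mem (by simp [hq, hhub]), hrow] at hcol
    exact hc (hrow ▸ q.1.isLt) hcol

theorem setOf_sameColorConn_paint_zero (hn : 2 ≤ n) :
    {p | SameColorConn (paint n t 0) (corner (by omega)) p} = upper n t ∪ hub n := by
  have hzero (p : Tile n) (hp : p ∈ upper n t ∪ hub n) : paint n t 0 p = 0 :=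
    hp.elim paint_of_mem_upper paint_of_mem_hub
  refine setOf_sameColorConn_eq (Or.inl (corner_mem_upper _ t)) (fun p hp => ?_)
    fun p hp q _ hcol => by_contra fun hq => ?_
  · rcases hp with hp | hp
    · exact sameColorConn_paint_of_mem_upper hn hp
    · obtain ⟨a, b⟩ := p
      simp only [mem_hub] at hp
      have hn0 : 0 < n := by omega
      obtain rfl : b = ⟨0, hn0⟩ := Fin.ext hp.2.2
      refine sameColorConn_corner_of_col_row _ (fun i hi => hzero _ ?_) fun j hj => hzero _ ?_
      · by_cases hi0 : (i : ℕ) = 0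
        · exact Or.inl (by simp only [mem_upper]; omega)
        · exact Or.inr (by simp only [mem_hub, and_true]; omega)
      · exact Or.inr (by simp only [mem_hub]; omega)
  · rw [hzero p hp, paint_of_not_mem hq] at hcol
    exact rowColor_ne_zero _ hcol.symm

theorem flood_paint_rowColor (hn : 2 ≤ n) (t : ℕ) (k : Fin 3) :
    flood (paint n t (rowColor t)) (corner (by omega)) k = paint n t k := by
  funext p
  by_cases hp : p ∈ upper n t
  · rw [flood_apply_of_sameColorConn (sameColorConn_paint_of_mem_upper hn hp),
      paint_of_mem_upper hp]
  · have hregion := setOf_sameColorConn_paint hn (rowColor_ne_zero t)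
      fun _ => (rowColor_succ_ne t).symm
    rw [flood_apply_of_not_sameColorConn (by rwa [← hregion] at hp),
      paint_of_not_mem_upper k hp]

theorem paint_rowColor_succ (t : ℕ) :
    paint n t (rowColor (t + 1)) = paint n (t + 1) (rowColor (t + 1)) := by
  funext p
  by_cases hhub : p ∈ hub n
  · simp [paint, hhub]
  · by_cases hrow : (p.1 : ℕ) = t + 1
    · simp [paint, hhub, hrow]
    · simp [paint, hhub, show (p.1 : ℕ) ≤ t ↔ (p.1 : ℕ) ≤ t + 1 by omega]

theorem flooded_paint_zero (ht : n ≤ t + 1) : Flooded (paint n t 0) := by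
  suffices ∀ p, paint n t 0 p = 0 from fun p q => (this p).trans (this q).symm
  intro p
  have : (p.1 : ℕ) ≤ t := by omega
  simp [paint, this]

theorem not_flooded_paint (hn : 3 ≤ n) (hc : c ≠ 0) : ¬Flooded (paint n t c) := by
  intro h
  have hhub : ((⟨1, by omega⟩, ⟨0, by omega⟩) : Tile n) ∈ hub n := by
    simp only [mem_hub, and_true]; omega
  have := h (corner (by omega)) (⟨1, by omega⟩, ⟨0, by omega⟩)
  rw [paint_of_mem_upper (corner_mem_upper _ t), paint_of_mem_hub hhub] at this
  exact hc this

/-- The hub is shorter than the next row, which it maps into along its column index. -/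
theorem ncard_upper_union_hub_lt (ht : t + 1 < n) :
    (upper n t ∪ hub n).ncard < (upper n (t + 1)).ncard := by
  have hdisj : Disjoint (upper n t) (hub n) := Set.disjoint_left.2 fun _ hp => hp.2
  have hsub : upper n t ⊆ upper n (t + 1) := fun p hp => ⟨by have := hp.1; omega, hp.2⟩
  rw [Set.ncard_union_eq hdisj, ← Set.ncard_sdiff_add_ncard_of_subset hsub, add_comm]
  refine Nat.add_lt_add_right ?_ _
  set f : Tile n → Tile n := fun p => (⟨t + 1, ht⟩, p.1)
  have hinj : Set.InjOn f (hub n) := fun p hp q hq hpq =>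
    Prod.ext (congrArg Prod.snd hpq) (Fin.ext (hp.2.2.trans hq.2.2.symm))
  have himage : f '' hub n ⊂ upper n (t + 1) \ upper n t := by
    refine (Set.ssubset_iff_of_subset ?_).2 ⟨(⟨t + 1, ht⟩, ⟨n - 1, by omega⟩), ?_, ?_⟩
    · rintro _ ⟨p, hp, rfl⟩
      simp only [mem_hub] at hp
      simp only [f, Set.mem_sdiff, mem_upper]
      omega
    · simp only [Set.mem_sdiff, mem_upper]
      omega
    · rintro ⟨p, hp, hfp⟩
      simp only [mem_hub] at hp
      have := congrArg (fun q : Tile n => (q.2 : ℕ)) hfp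
      simp only [f] at this
      omega
  rw [← hinj.ncard_image]
  exact Set.ncard_lt_ncard himage

theorem setOf_sameColorConn_paint_subset (hn : 2 ≤ n)
    (hk : t + 1 < n → k ≠ rowColor (t + 1)) :
    {p | SameColorConn (paint n t k) (corner (by omega)) p} ⊆ upper n t ∪ hub n := by
  by_cases hk0 : k = 0
  · rw [hk0, setOf_sameColorConn_paint_zero hn]
  · rw [setOf_sameColorConn_paint hn hk0 hk]
    exact Set.subset_union_left

theorem regionSize_flood_lt_rowColor_succ (ht : t + 1 < n) (hk : k ≠ rowColor (t + 1)) :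
    regionSize (flood (paint n t (rowColor t)) (corner (by omega)) k) (corner (by omega)) <
      regionSize (flood (paint n t (rowColor t)) (corner (by omega)) (rowColor (t + 1)))
        (corner (by omega)) := by
  rw [flood_paint_rowColor (by omega), flood_paint_rowColor (by omega), paint_rowColor_succ,
    regionSize, regionSize, setOf_sameColorConn_paint (by omega) (rowColor_ne_zero _)
      fun _ => (rowColor_succ_ne _).symm]
  calc _ ≤ (upper n t ∪ hub n).ncard :=
        Set.ncard_le_ncard (setOf_sameColorConn_paint_subset (by omega) fun _ => hk)
    _ < _ := ncard_upper_union_hub_lt ht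

theorem regionSize_flood_lt_zero (hn : 3 ≤ n) (ht : n ≤ t + 1) (hk : k ≠ 0) :
    regionSize (flood (paint n t (rowColor t)) (corner (by omega)) k) (corner (by omega)) <
      regionSize (flood (paint n t (rowColor t)) (corner (by omega)) 0) (corner (by omega)) := by
  rw [flood_paint_rowColor (by omega), flood_paint_rowColor (by omega), regionSize, regionSize,
    setOf_sameColorConn_paint (by omega) hk (by omega), setOf_sameColorConn_paint_zero (by omega)]
  refine Set.ncard_lt_ncard (Set.ssubset_union_left_iff.2 fun hsub => ?_)
  have hhub : ((⟨1, by omega⟩, ⟨0, by omega⟩) : Tile n) ∈ hub n := by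
    simp only [mem_hub, and_true]; omega
  exact (hsub hhub).2 hhub

theorem length_of_isGreedy_paint (hn : 3 ≤ n) (d t : ℕ) (ms : List (Fin 3)) (ht : t + d + 1 = n)
    (hms : IsGreedy (corner (by omega)) (paint n t (rowColor t)) ms) : ms.length = d + 1 := by
  induction d generalizing t ms with
  | zero =>
    obtain _ | ⟨k, ks⟩ := ms
    · exact absurd hms (not_flooded_paint hn (rowColor_ne_zero t))
    have hks := IsGreedy.tail_of_forall_lt hms fun k hk => regionSize_flood_lt_zero hn (by omega) hk
    rw [flood_paint_rowColor (by omega)] at hks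
    rw [IsGreedy.eq_nil_of_flooded hks (flooded_paint_zero (by omega))]
    rfl
  | succ d ih =>
    obtain _ | ⟨k, ks⟩ := ms
    · exact absurd hms (not_flooded_paint hn (rowColor_ne_zero t))
    have hks := IsGreedy.tail_of_forall_lt hms fun k hk =>
      regionSize_flood_lt_rowColor_succ (by omega) hk
    rw [flood_paint_rowColor (by omega), paint_rowColor_succ] at hks
    rw [List.length_cons, ih (t + 1) ks (by omega) hks]

theorem flood_paint_zero_one (hn : 2 ≤ n) :
    flood (paint n 0 0) (corner (by omega)) 1 =
      fun p => if (p.1 : ℕ) = 0 ∨ p ∈ hub n then 1 else rowColor p.1 := by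
  funext p
  have hregion := setOf_sameColorConn_paint_zero (t := 0) hn
  by_cases hp : p ∈ upper n 0 ∪ hub n
  · rw [flood_apply_of_sameColorConn (by rwa [← hregion] at hp), if_pos]
    exact hp.imp_left fun h => Nat.le_zero.1 h.1
  · rw [flood_apply_of_not_sameColorConn (by rwa [← hregion] at hp), paint_of_not_mem hp, if_neg]
    rintro (h | h)
    · exact hp (Or.inl ⟨h.le, fun hhub => hhub.1.ne' h⟩)
    · exact hp (Or.inr h)

/-- The optimal solution: colour 0 absorbs the hub, which then reaches every odd row, and the
remaining tiles are the even rows. -/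
theorem flooded_playMoves_paint (hn : 3 ≤ n) :
    Flooded (playMoves (corner (by omega)) (paint n 0 2) [0, 1, 2]) := by
  change Flooded (flood (flood (flood (paint n 0 (rowColor 0)) _ 0) _ 1) _ 2)
  rw [flood_paint_rowColor (by omega), flood_paint_zero_one (by omega)]
  refine flooded_flood_of_forall fun ⟨a, b⟩ hp => ?_
  dsimp only at hp
  have hab : (a : ℕ) = 0 ∨ (a, b) ∈ hub n ∨ rowColor a = 1 := by
    split_ifs at hp with h
    exacts [h.imp_right Or.inl, Or.inr (Or.inr (rowColor_eq_one_of_ne_two hp))]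
  refine sameColorConn_corner_of_col_row _ (k := 1) (fun i hi => ?_) fun j hj => ?_ <;> dsimp only
  · by_cases hi' : (i : ℕ) + 1 < n
    · rw [if_pos]
      by_cases hi0 : (i : ℕ) = 0
      exacts [Or.inl hi0, Or.inr (by simp only [mem_hub, and_true]; omega)]
    · obtain rfl : i = a := Fin.ext (by omega)
      have hi1 : rowColor i = 1 := by
        rcases hab with h | h | h
        · omega
        · exact absurd (mem_hub.1 h).2.1 hi'
        · exact h
      split_ifs <;> [rfl; exact hi1]
  · rcases hab with h | h | h
    · rw [if_pos (Or.inl h)]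
    · simp only [mem_hub] at h
      rw [if_pos (Or.inr (by simp only [mem_hub]; omega))]
    · split_ifs <;> [rfl; exact h]

theorem exists_paint_eq_not_sameColorConn (hn : 3 ≤ n) (k : Fin 3) :
    ∃ p, paint n 0 2 p = k ∧ ¬SameColorConn (paint n 0 2) (corner (by omega)) p := by
  have hregion := setOf_sameColorConn_paint (n := n) (t := 0) (by omega) (c := 2) (by decide)
    fun _ => by decide
  have hout (p : Tile n) (hp : (p.1 : ℕ) ≠ 0) :
      ¬SameColorConn (paint n 0 2) (corner (by omega)) p := fun h => by
    have : p ∈ upper n 0 := by rw [← hregion]; exact h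
    exact hp (Nat.le_zero.1 this.1)
  fin_cases k
  · refine ⟨(⟨1, by omega⟩, ⟨0, by omega⟩), paint_of_mem_hub ?_, hout _ one_ne_zero⟩
    simp only [mem_hub, and_true]; omega
  · refine ⟨(⟨1, by omega⟩, ⟨1, by omega⟩), ?_, hout _ one_ne_zero⟩
    rw [paint_of_not_mem (by simp [mem_upper, mem_hub])]; simp [rowColor]
  · refine ⟨(⟨2, by omega⟩, ⟨1, by omega⟩), ?_, hout _ two_ne_zero⟩
    rw [paint_of_not_mem (by simp [mem_upper, mem_hub])]; simp [rowColor]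

theorem floodMoves_paint (hn : 3 ≤ n) : floodMoves (paint n 0 2) (corner (by omega)) = 3 :=
  floodMoves_eq (ms₀ := [0, 1, 2]) (flooded_playMoves_paint hn) fun _ hms =>
    card_le_length_of_flooded_playMoves (not_flooded_paint hn (by decide))
      (exists_paint_eq_not_sameColorConn hn) hms

end FloodIt.GreedyTrap

/-- for every n ≥ 4 there is an n×n board on 3 colours which can be
flooded in m(B) = 3 moves, but on which the greedy strategy (always pick the
colour giving the largest immediate gain) takes n moves. -/
theorem stmt19 (n : ℕ) (hn : 4 ≤ n) :
    ∃ B : Board n 3,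
      floodMoves B (⟨0, by omega⟩, ⟨0, by omega⟩) = 3 ∧
      ∀ ms : List (Fin 3), IsGreedy (⟨0, by omega⟩, ⟨0, by omega⟩) B ms → ms.length = n :=
  ⟨FloodIt.GreedyTrap.paint n 0 2, FloodIt.GreedyTrap.floodMoves_paint (by omega), fun ms hms =>
    (FloodIt.GreedyTrap.length_of_isGreedy_paint (by omega) (n - 1) 0 ms (by omega) hms).trans
      (by omega)⟩
end
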